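/- Let q = 2 and assume ∫ ‖x‖² K(dx) < ∞. If (β₂, Y₂) ∈ A_2 minimizes k_2 over A_2, then for every φ ∈ ℝ^d and every Ψ ∈ L²(K) such that |Ψ(x)| ≤ a·Y₂(x) K-a.e. for some a > 0 and c·φ + ∫ Ψ(x)·x K(dx) = 0, the first-order condition β₂ᵀcφ + ∫ Ψ(x)(Y₂(x) − 1) K(dx) = 0 holds. -/

import Mathlib

open MeasureTheory
open scoped ENNReal RealInnerProductSpace

noncomputable section

/-- `ℝ^d` with the Euclidean norm. -/
abbrev E (d : ℕ) := EuclideanSpace ℝ (Fin d)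

/-- The truncation function `h(x) = x · 1_{‖x‖ ≤ 1}`. -/
def trunc {d : ℕ} (x : E d) : E d := if ‖x‖ ≤ 1 then x else 0

/-- Action of a `d × d` matrix on a vector of `ℝ^d`. -/
def mv {d : ℕ} (c : Matrix (Fin d) (Fin d) ℝ) (v : E d) : E d :=
  (WithLp.equiv 2 (Fin d → ℝ)).symm (c.mulVec (WithLp.equiv 2 (Fin d → ℝ) v))

/-- `K` is a Lévy measure: `K({0}) = 0` and `∫ min(1,‖x‖²) K(dx) < ∞`. -/
def IsLevyMeasure {d : ℕ} (K : Measure (E d)) : Prop :=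
  K {0} = 0 ∧ ∫⁻ x, ENNReal.ofReal (min 1 (‖x‖ ^ 2)) ∂K < ⊤

/-- `g_q(y) = y^q - 1 - q(y-1)` (real exponent `q`). -/
def gq (q y : ℝ) : ℝ := y ^ q - 1 - q * (y - 1)

/-- `k_q(β, Y) = (q(q-1)/2) βᵀcβ + ∫ g_q(Y(x)) K(dx)`. -/
def kq {d : ℕ} (q : ℝ) (c : Matrix (Fin d) (Fin d) ℝ) (K : Measure (E d))
    (β : E d) (Y : E d → ℝ) : ℝ :=
  q * (q - 1) / 2 * ⟪β, mv c β⟫ + ∫ x, gq q (Y x) ∂K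

/-- The martingale condition `(M)`:
`∫ ‖x Y(x) - h(x)‖ K(dx) < ∞` and `b + cβ + ∫ (x Y(x) - h(x)) K(dx) = 0`. -/
def MCond {d : ℕ} (b : E d) (c : Matrix (Fin d) (Fin d) ℝ) (K : Measure (E d))
    (β : E d) (Y : E d → ℝ) : Prop :=
  Integrable (fun x => Y x • x - trunc x) K ∧
  b + mv c β + ∫ x, (Y x • x - trunc x) ∂K = 0

/-- Membership in the admissible set `A_q`: `Y` is measurable, `Y > 0` `K`-a.e.
(recall that functions which agree `K`-a.e. are identified), `(β,Y)` satisfies the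
martingale condition `(M)`, and `∫ g_q(Y(x)) K(dx) < ∞`, i.e. `k_q(β,Y) < ∞`. -/
def memA {d : ℕ} (q : ℝ) (b : E d) (c : Matrix (Fin d) (Fin d) ℝ)
    (K : Measure (E d)) (β : E d) (Y : E d → ℝ) : Prop :=
  Measurable Y ∧ (∀ᵐ x ∂K, 0 < Y x) ∧ MCond b c K β Y ∧
  ∫⁻ x, ENNReal.ofReal (gq q (Y x)) ∂K < ⊤

/-! For `|ε| < 1 / a` the perturbation `(β₂ + εφ, Y₂ + εΨ)` is again admissible: it stays positive
since `|εΨ| < Y₂`, it satisfies `(M)` because `(M)` is affine in `(β, Y)` and `(φ, Ψ)` solves its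
homogeneous part, and its cost is finite because `Ψ ∈ L²(K)`. Along this line `k₂` is the
quadratic `k₂(β₂, Y₂) + 2εA + ε²B`, where `A` is the left-hand side of the claim; since it is
minimal at the interior point `ε = 0`, its derivative `2A` vanishes there. -/

open Topology

lemma mv_eq_toEuclideanLin {d : ℕ} (c : Matrix (Fin d) (Fin d) ℝ) (v : E d) :
    mv c v = Matrix.toEuclideanLin c v := rfl

section SquareLoss

variable {α : Type*} [MeasurableSpace α] {μ : Measure α}

lemma gq_two (y : ℝ) : gq 2 y = (y - 1) ^ 2 := by
  rw [gq, show (2 : ℝ) = (2 : ℕ) by norm_num, Real.rpow_natCast]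
  ring

lemma lintegral_ofReal_gq_two_lt_top_iff {Y : α → ℝ} (hY : AEStronglyMeasurable Y μ) :
    ∫⁻ x, ENNReal.ofReal (gq 2 (Y x)) ∂μ < ⊤ ↔ MemLp (fun x => Y x - 1) 2 μ := by
  have hY1 : AEStronglyMeasurable (fun x => Y x - 1) μ := hY.sub aestronglyMeasurable_const
  have hY1sq : AEStronglyMeasurable (fun x => (Y x - 1) ^ 2) μ := hY1.pow 2
  rw [memLp_two_iff_integrable_sq hY1, Integrable, and_iff_right hY1sq, HasFiniteIntegral]
  simp only [gq_two, Real.enorm_eq_ofReal (sq_nonneg _)]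

lemma integral_gq_two_add_mul {Y Ψ : α → ℝ} (hY : MemLp (fun x => Y x - 1) 2 μ)
    (hΨ : MemLp Ψ 2 μ) (ε : ℝ) :
    ∫ x, gq 2 (Y x + ε * Ψ x) ∂μ = ∫ x, gq 2 (Y x) ∂μ
      + 2 * ε * ∫ x, Ψ x * (Y x - 1) ∂μ + ε ^ 2 * ∫ x, Ψ x ^ 2 ∂μ := by
  have hY2 : Integrable (fun x => (Y x - 1) ^ 2) μ := hY.integrable_sq
  have hΨY : Integrable (fun x => Ψ x * (Y x - 1)) μ := hΨ.integrable_mul hY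
  have hΨ2 : Integrable (fun x => Ψ x ^ 2) μ := hΨ.integrable_sq
  simp only [gq_two]
  calc ∫ x, (Y x + ε * Ψ x - 1) ^ 2 ∂μ
      = ∫ x, ((Y x - 1) ^ 2 + 2 * ε * (Ψ x * (Y x - 1))) + ε ^ 2 * Ψ x ^ 2 ∂μ := by
        congr 1 with x; ring
    _ = _ := by
      have hlin : Integrable (fun x => (Y x - 1) ^ 2 + 2 * ε * (Ψ x * (Y x - 1))) μ :=
        hY2.add (hΨY.const_mul _)
      rw [integral_add hlin (hΨ2.const_mul _),
        integral_add hY2 (hΨY.const_mul _), integral_const_mul, integral_const_mul]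

end SquareLoss

lemma inner_add_smul_mv_add_smul {d : ℕ} {c : Matrix (Fin d) (Fin d) ℝ} (hc : c.IsHermitian)
    (β φ : E d) (ε : ℝ) :
    ⟪β + ε • φ, mv c (β + ε • φ)⟫
      = ⟪β, mv c β⟫ + 2 * ε * ⟪β, mv c φ⟫ + ε ^ 2 * ⟪φ, mv c φ⟫ := by
  have hsymm : ⟪φ, mv c β⟫ = ⟪β, mv c φ⟫ := by
    rw [real_inner_comm]; exact Matrix.isSymmetric_toEuclideanLin_iff.2 hc β φ
  simp only [mv_eq_toEuclideanLin, map_add, map_smul, inner_add_left, inner_add_right,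
    real_inner_smul_left, real_inner_smul_right] at hsymm ⊢
  rw [hsymm]
  ring

lemma kq_two_add_smul {d : ℕ} {c : Matrix (Fin d) (Fin d) ℝ} (hc : c.IsHermitian)
    {K : Measure (E d)} {β φ : E d} {Y Ψ : E d → ℝ} (hY : MemLp (fun x => Y x - 1) 2 K)
    (hΨ : MemLp Ψ 2 K) (ε : ℝ) :
    kq 2 c K (β + ε • φ) (fun x => Y x + ε * Ψ x) = kq 2 c K β Y
      + 2 * ε * (⟪β, mv c φ⟫ + ∫ x, Ψ x * (Y x - 1) ∂K)
      + ε ^ 2 * (⟪φ, mv c φ⟫ + ∫ x, Ψ x ^ 2 ∂K) := by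
  rw [kq, kq, inner_add_smul_mv_add_smul hc, integral_gq_two_add_mul hY hΨ]
  ring

lemma integrable_smul_self_of_memLp {F : Type*} [NormedAddCommGroup F] [NormedSpace ℝ F]
    [MeasurableSpace F] [OpensMeasurableSpace F] [SecondCountableTopology F] {K : Measure F}
    {Ψ : F → ℝ} (hΨ : MemLp Ψ 2 K) (hsq : Integrable (fun x => ‖x‖ ^ 2) K) :
    Integrable (fun x => Ψ x • x) K := by
  have hid : MemLp (fun x : F => x) 2 K :=
    (memLp_two_iff_integrable_sq_norm aestronglyMeasurable_id).2 hsq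
  exact memLp_one_iff_integrable.1 (hid.smul hΨ)

section Admissible

variable {d : ℕ} {b : E d} {c : Matrix (Fin d) (Fin d) ℝ} {K : Measure (E d)}
  {β φ : E d} {Y Ψ : E d → ℝ}

lemma MCond.add_smul (hM : MCond b c K β Y) (hΨ : Integrable (fun x => Ψ x • x) K)
    (hφΨ : mv c φ + ∫ x, Ψ x • x ∂K = 0) (ε : ℝ) :
    MCond b c K (β + ε • φ) (fun x => Y x + ε * Ψ x) := by
  obtain ⟨hint, heq⟩ := hM
  have hsplit : (fun x => (Y x + ε * Ψ x) • x - trunc x)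
      = fun x => (Y x • x - trunc x) + ε • (Ψ x • x) := by
    funext x; rw [_root_.add_smul, smul_smul]; abel
  have hεΨ : Integrable (fun x => ε • (Ψ x • x)) K := hΨ.smul ε
  refine ⟨hsplit ▸ hint.add hεΨ, ?_⟩
  rw [hsplit, integral_add hint hεΨ, integral_smul, mv_eq_toEuclideanLin, map_add, map_smul]
  calc b + (mv c β + ε • mv c φ) + ((∫ x, (Y x • x - trunc x) ∂K) + ε • ∫ x, Ψ x • x ∂K)
      = (b + mv c β + ∫ x, (Y x • x - trunc x) ∂K) + ε • (mv c φ + ∫ x, Ψ x • x ∂K) := by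
        module
    _ = 0 := by rw [heq, hφΨ, smul_zero, add_zero]

lemma memA_two_add_smul (hmem : memA 2 b c K β Y) (hΨm : Measurable Ψ) (hΨ : MemLp Ψ 2 K)
    (hΨx : Integrable (fun x => Ψ x • x) K) {a : ℝ} (hbd : ∀ᵐ x ∂K, |Ψ x| ≤ a * Y x) {ε : ℝ}
    (hε : |ε| * a < 1) (hφΨ : mv c φ + ∫ x, Ψ x • x ∂K = 0) :
    memA 2 b c K (β + ε • φ) (fun x => Y x + ε * Ψ x) := by
  obtain ⟨hYm, hYpos, hM, hfin⟩ := hmem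
  have hY1 := (lintegral_ofReal_gq_two_lt_top_iff hYm.aestronglyMeasurable).1 hfin
  refine ⟨hYm.add (hΨm.const_mul ε), ?_, hM.add_smul hΨx hφΨ ε, ?_⟩
  · filter_upwards [hYpos, hbd] with x hx hbdx
    have hεΨ : |ε * Ψ x| ≤ |ε| * a * Y x := by
      rw [abs_mul, mul_assoc]; exact mul_le_mul_of_nonneg_left hbdx (abs_nonneg ε)
    nlinarith [neg_abs_le (ε * Ψ x)]
  · refine (lintegral_ofReal_gq_two_lt_top_iff
      (hYm.add (hΨm.const_mul ε)).aestronglyMeasurable).2 ?_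
    convert hY1.add (hΨ.const_mul ε) using 1
    funext x
    simp only [Pi.add_apply]
    ring

end Admissible

lemma eq_zero_of_eventually_nonneg_mul_add_sq_mul {A B : ℝ}
    (h : ∀ᶠ ε in 𝓝 0, 0 ≤ ε * A + ε ^ 2 * B) : A = 0 := by
  have hmin : IsLocalMin (fun ε : ℝ => ε * A + ε ^ 2 * B) 0 := by
    filter_upwards [h] with ε hε
    simpa using hε
  have hderiv : HasDerivAt (fun ε : ℝ => ε * A + ε ^ 2 * B) A 0 := by
    simpa using ((hasDerivAt_id' 0).mul_const A).fun_add ((hasDerivAt_pow 2 0).mul_const B)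
  exact hmin.hasDerivAt_eq_zero hderiv

theorem stmt6_general (d : ℕ)
    (b : E d) (c : Matrix (Fin d) (Fin d) ℝ) (hpsd : c.PosSemidef)
    (K : Measure (E d))
    (hsq : Integrable (fun x => ‖x‖ ^ 2) K)
    (β₂ : E d) (Y₂ : E d → ℝ)
    (hmem : memA 2 b c K β₂ Y₂)
    (hmin : ∀ β Y, memA 2 b c K β Y → kq 2 c K β₂ Y₂ ≤ kq 2 c K β Y)
    (φ : E d) (Ψ : E d → ℝ) (hΨ : MemLp Ψ 2 K)
    (hbd : ∃ a > 0, ∀ᵐ x ∂K, |Ψ x| ≤ a * Y₂ x)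
    (hconstraint : mv c φ + ∫ x, Ψ x • x ∂K = 0) :
    ⟪β₂, mv c φ⟫ + ∫ x, Ψ x * (Y₂ x - 1) ∂K = 0 := by
  obtain ⟨a, -, hbd⟩ := hbd
  have hY1 : MemLp (fun x => Y₂ x - 1) 2 K :=
    (lintegral_ofReal_gq_two_lt_top_iff hmem.1.aestronglyMeasurable).1 hmem.2.2.2
  -- admissibility requires a measurable `Y`, so perturb by a measurable version of `Ψ`
  set Ψ' := hΨ.1.mk Ψ
  have hΨΨ' : Ψ =ᵐ[K] Ψ' := hΨ.1.ae_eq_mk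
  have hΨ' : MemLp Ψ' 2 K := hΨ.ae_eq hΨΨ'
  have hbd' : ∀ᵐ x ∂K, |Ψ' x| ≤ a * Y₂ x := by
    filter_upwards [hbd, hΨΨ'] with x hx hxe
    rwa [← hxe]
  have hconstraint' : mv c φ + ∫ x, Ψ' x • x ∂K = 0 := by
    rwa [integral_congr_ae (hΨΨ'.mono fun x hx => by rw [hx])] at hconstraint
  rw [integral_congr_ae (hΨΨ'.mono fun x hx => by rw [hx])]
  have hsmall : ∀ᶠ ε in 𝓝 (0 : ℝ), |ε| * a < 1 :=
    ((continuous_abs.mul continuous_const).tendsto' (0 : ℝ) 0 (by simp)).eventually_lt_const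
      one_pos
  suffices 2 * (⟪β₂, mv c φ⟫ + ∫ x, Ψ' x * (Y₂ x - 1) ∂K) = 0 by linarith
  refine eq_zero_of_eventually_nonneg_mul_add_sq_mul (B := ⟪φ, mv c φ⟫ + ∫ x, Ψ' x ^ 2 ∂K) ?_
  filter_upwards [hsmall] with ε hε
  have hle := hmin _ _ (memA_two_add_smul hmem hΨ.1.measurable_mk hΨ'
    (integrable_smul_self_of_memLp hΨ' hsq) hbd' hε hconstraint')
  rw [kq_two_add_smul hpsd.1 hY1 hΨ'] at hle
  linarith

/-- **First-order condition (3.4)**: if `∫ ‖x‖² K(dx) < ∞` and `(β₂, Y₂)` minimizes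
`k₂` over `A₂`, then for every `φ ∈ ℝ^d` and every `Ψ ∈ L²(K)` with `|Ψ| ≤ a Y₂`
`K`-a.e. for some `a > 0` and `cφ + ∫ Ψ(x) x K(dx) = 0`, one has
`β₂ᵀcφ + ∫ Ψ(x)(Y₂(x) - 1) K(dx) = 0`. -/
theorem stmt6 (d : ℕ) (hd : 1 ≤ d)
    (b : E d) (c : Matrix (Fin d) (Fin d) ℝ) (hsym : c.IsSymm) (hpsd : c.PosSemidef)
    (K : Measure (E d)) (hK : IsLevyMeasure K)
    (hsq : Integrable (fun x => ‖x‖ ^ 2) K)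
    (β₂ : E d) (Y₂ : E d → ℝ)
    (hmem : memA 2 b c K β₂ Y₂)
    (hmin : ∀ β Y, memA 2 b c K β Y → kq 2 c K β₂ Y₂ ≤ kq 2 c K β Y)
    (φ : E d) (Ψ : E d → ℝ) (hΨ : MemLp Ψ 2 K)
    (hbd : ∃ a > 0, ∀ᵐ x ∂K, |Ψ x| ≤ a * Y₂ x)
    (hconstraint : mv c φ + ∫ x, Ψ x • x ∂K = 0) :
    ⟪β₂, mv c φ⟫ + ∫ x, Ψ x * (Y₂ x - 1) ∂K = 0 :=
  stmt6_general d b c hpsd K hsq β₂ Y₂ hmem hmin φ Ψ hΨ hbd hconstraint
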